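/- arXiv:2508.14240 — 2 statements merged into one kernel-verified Lean document; each statement's English description precedes it below -/
import Mathlib

section
/- Let ∇ be metric compatible for a degenerate metric whose kernel is spanned by an odd element Q with [Q,Q] = 2P, P ∉ span{Q}. Suppose ∇_X Q = f_X Q for all X. Then T(Q,Q) = 2 f_Q Q - 2P, and this cannot vanish; hence any metric compatible connection has nonzero torsion. -/
/-! For odd `Q` the sign `(-1)^{|Q||Q|}` is `-1`, so `T(Q,Q) = 2 ∇_Q Q - [Q,Q] = 2 (f_Q Q - P)`.
Since `V` has no `2`-torsion this vanishes only if `P = f_Q Q`, which is excluded. -/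

/-- The sign `(-1)^{ab}` for parities `a, b : ZMod 2`, as an integer. -/
def sgn (a b : ZMod 2) : ℤ := if a = 1 ∧ b = 1 then -1 else 1

/-- The torsion tensor `T(X,Y) = ∇_X Y - (-1)^{|X||Y|} ∇_Y X - [X,Y]`. -/
def torsion {V : Type*} [AddCommGroup V] (p : V → ZMod 2) (br nb : V → V → V)
    (X Y : V) : V :=
  nb X Y - sgn (p X) (p Y) • nb Y X - br X Y

theorem torsion_self_of_odd {V : Type*} [AddCommGroup V] (p : V → ZMod 2) (br nb : V → V → V)
    {X : V} (hX : p X = 1) : torsion p br nb X X = (2 : ℤ) • nb X X - br X X := by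
  simp only [torsion, sgn, hX, and_self, if_true, neg_smul, one_smul, sub_neg_eq_add, two_smul]

theorem metric_compatible_connection_has_torsion_general
    {A V : Type*} [CommRing A] [AddCommGroup V] [Module A V] [NoZeroSMulDivisors ℤ V]
    (p : V → ZMod 2)
    (br nb : V → V → V) (Q P : V) (f : V → A)
    (hQodd : p Q = 1)
    -- the kernel is spanned by Q, giving ∇_X Q = f_X • Q
    (hf : ∀ X : V, nb X Q = f X • Q)
    -- [Q,Q] = 2P
    (hQQ : br Q Q = (2 : ℤ) • P)
    -- P is not in the span of Q
    (hPQ : ∀ a : A, P ≠ a • Q) :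
    torsion p br nb Q Q = (2 : ℤ) • (f Q • Q) - (2 : ℤ) • P ∧
      torsion p br nb Q Q ≠ 0 := by
  have hT : torsion p br nb Q Q = (2 : ℤ) • (f Q • Q) - (2 : ℤ) • P := by
    rw [torsion_self_of_odd p br nb hQodd, hf, hQQ]
  refine ⟨hT, ?_⟩
  rw [hT, sub_ne_zero]
  exact (smul_right_injective V two_ne_zero).ne (hPQ (f Q)).symm

theorem metric_compatible_connection_has_torsion
    {A V : Type*} [CommRing A] [AddCommGroup V] [Module A V] [NoZeroSMulDivisors ℤ V]
    (p : V → ZMod 2) (act : V → A → A)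
    (g : V → V → A)                    -- the degenerate metric ⟨·|·⟩
    (br nb : V → V → V) (Q P : V) (f : V → A)
    (hQodd : p Q = 1)
    -- Q lies in the kernel of g
    (hker : ∀ Y : V, g Q Y = 0)
    -- metric compatibility: X⟨Y|Z⟩ = ⟨∇_X Y|Z⟩ + (-1)^{|X||Y|}⟨Y|∇_X Z⟩
    (hcompat : ∀ X Y Z : V,
      act X (g Y Z) = g (nb X Y) Z + sgn (p X) (p Y) • g Y (nb X Z))
    -- the kernel is spanned by Q, giving ∇_X Q = f_X • Q
    (hf : ∀ X : V, nb X Q = f X • Q)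
    -- [Q,Q] = 2P
    (hQQ : br Q Q = (2 : ℤ) • P)
    -- P is not in the span of Q
    (hPQ : ∀ a : A, P ≠ a • Q) :
    torsion p br nb Q Q = (2 : ℤ) • (f Q • Q) - (2 : ℤ) • P ∧
      torsion p br nb Q Q ≠ 0 :=
  metric_compatible_connection_has_torsion_general p br nb Q P f hQodd hf hQQ hPQ
end

section
/- Let g be a symmetric bilinear form on a free module of vector fields with basis {∂_a (a = 1..n), ∂_t, ∂_τ} over A = C^∞(ℝ^{n+1})[τ], τ² = 0. Suppose the kernel of g is spanned by Q = ∂_τ + τ ∂_t and that the component functions g_{ab}, g_{ta}, g_{tt} depend only on (x,t). Then necessarily g(∂_τ, ∂_a) = -τ g_{ta}, g(∂_τ, ∂_t) = -τ g_{tt}, and g(∂_τ, ∂_τ) = 0; i.e. the metric is fully determined by its reduced components. -/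
set_option synthInstance.maxHeartbeats 1000000
/-!
`A = C^∞(ℝ^{n+1})[τ]` (τ² = 0) is modelled as the trivial square-zero extension
`TrivSqZeroExt F F` of the ring `F` of functions of `(x, t)`, and the vector fields as the
free `A`-module on the basis indexed by `Fin n ⊕ Bool`, with `inr false = ∂_t` and
`inr true = ∂_τ`.

Since `Q = ∂_τ + τ ∂_t` lies in the kernel of `g`, linearity in the first slot gives
`g(∂_τ, X) = -τ g(∂_t, X)` for every `X`. Applying this twice, with symmetry in between,
gives `g(∂_τ, ∂_τ) = τ² g(∂_t, ∂_t) = 0`.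
-/

noncomputable section

variable (n : ℕ)

/-- The ring `C^∞(ℝⁿ × ℝ)` of functions of the even coordinates `(x, t)`. -/
abbrev F := ((Fin n → ℝ) × ℝ) → ℝ

/-- `A = C^∞(ℝ^{n+1})[τ]`, with `τ² = 0`. -/
abbrev SA := TrivSqZeroExt (F n) (F n)

/-- The odd coordinate `τ`. -/
def τA : SA n := TrivSqZeroExt.inr 1

/-- The free module of vector fields, with basis `∂_a (a : Fin n)`, `∂_t`, `∂_τ`. -/
abbrev Vect := (Fin n ⊕ Bool) → SA n

def e (i : Fin n ⊕ Bool) : Vect n := Pi.single i 1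

/-- The odd vector field `Q = ∂_τ + τ•∂_t`. -/
def Qvf : Vect n := e n (Sum.inr true) + τA n • e n (Sum.inr false)

theorem τA_mul_self : τA n * τA n = 0 := by
  simp [τA]

section LeftKernel

variable {R M : Type*} [Ring R] (g : M → M → R)

theorem apply_eq_neg_mul_of_add_smul_mem_leftKer [Add M] [SMul R M]
    (hadd : ∀ X Y Z : M, g (X + Y) Z = g X Z + g Y Z)
    (hsmul : ∀ (a : R) (X Z : M), g (a • X) Z = a * g X Z)
    {u v : M} {c : R} (hker : ∀ X : M, g (u + c • v) X = 0) (X : M) :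
    g u X = -(c * g v X) := by
  have h := hker X
  rw [hadd, hsmul] at h
  exact eq_neg_of_add_eq_zero_left h

theorem apply_self_eq_zero_of_apply_eq_neg_mul {u v : M} {c : R} (hc : c * c = 0)
    (hsym : g v u = g u v) (hu : ∀ X : M, g u X = -(c * g v X)) :
    g u u = 0 := by
  calc g u u = -(c * g u v) := by rw [hu, hsym]
    _ = c * c * g v v := by rw [hu]; noncomm_ring
    _ = 0 := by rw [hc, zero_mul]

end LeftKernel

theorem local_form_of_degenerate_metric
    (g : Vect n → Vect n → SA n)
    -- g is additive and A-linear in the first slot (convention ⟨fX|Z⟩ = f⟨X|Z⟩)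
    (hadd : ∀ X Y Z : Vect n, g (X + Y) Z = g X Z + g Y Z)
    (hsmul : ∀ (a : SA n) (X Z : Vect n), g (a • X) Z = a * g X Z)
    -- graded symmetry in the relevant (even, odd) component
    (hsym : g (e n (Sum.inr false)) (e n (Sum.inr true))
          = g (e n (Sum.inr true)) (e n (Sum.inr false)))
    -- the τ-independent prescribed components g_{ta}, g_{tt}
    (Gta : Fin n → F n) (Gtt : F n)
    (hta : ∀ a : Fin n, g (e n (Sum.inr false)) (e n (Sum.inl a))
            = TrivSqZeroExt.inl (Gta a))
    (htt : g (e n (Sum.inr false)) (e n (Sum.inr false)) = TrivSqZeroExt.inl Gtt)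
    -- the kernel of g is spanned by Q; in particular Q ∈ ker g
    (hker : ∀ X : Vect n, g (Qvf n) X = 0) :
    (∀ a : Fin n, g (e n (Sum.inr true)) (e n (Sum.inl a))
        = -(τA n * TrivSqZeroExt.inl (Gta a))) ∧
    g (e n (Sum.inr true)) (e n (Sum.inr false)) = -(τA n * TrivSqZeroExt.inl Gtt) ∧
    g (e n (Sum.inr true)) (e n (Sum.inr true)) = 0 := by
  have hτ := apply_eq_neg_mul_of_add_smul_mem_leftKer g hadd hsmul hker
  refine ⟨fun a => ?_, ?_, ?_⟩
  · rw [hτ, hta]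
  · rw [hτ, htt]
  · exact apply_self_eq_zero_of_apply_eq_neg_mul g (τA_mul_self n) hsym hτ

end
end
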